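/- For every multi-return macro tree transducer M, the translation membership problem for τ_{IO,M} is decidable: the characteristic function (s,t) ↦ (if (s,t) ∈ τ_{IO,M} then true else false) from T_Σ × T_Δ to Bool is computable. -/

import Mathlib

namespace MttF

/-- Finite ordered trees over a label type `α`. -/
inductive RTree (α : Type) : Type
  | node : α → List (RTree α) → RTree α

namespace RTree

variable {α β : Type}

/-- The root label of a tree. -/
def label : RTree α → α
  | node a _ => a

/-- The list of immediate subtrees of a tree. -/
def children : RTree α → List (RTree α)
  | node _ ts => ts

/-- Relabelling of trees. -/
def map (f : α → β) : RTree α → RTree β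
  | node a ts => node (f a) (ts.attach.map (fun x => map f x.1))
decreasing_by
  have := List.sizeOf_lt_of_mem x.2
  simp only [node.sizeOf_spec]
  omega

/-- A tree is well-formed with respect to a rank function if every node labeled
by a rank-`k` symbol has exactly `k` children. `T_Σ` is the set of well-formed
trees over `Σ`. -/
inductive Wf (rk : α → ℕ) : RTree α → Prop
  | node {a : α} {ts : List (RTree α)} :
      ts.length = rk a → (∀ t ∈ ts, Wf rk t) → Wf rk (node a ts)

/-- `Subtree u t` holds iff `u` is a subtree of `t` (rooted at some node of `t`). -/
inductive Subtree : RTree α → RTree α → Prop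
  | refl (t : RTree α) : Subtree t t
  | step {u c : RTree α} {a : α} {ts : List (RTree α)} :
      c ∈ ts → Subtree u c → Subtree u (node a ts)

end RTree

/-- Labels for output trees with parameters: trees over `Δ ∪ Y`. -/
inductive OLab (Δ : Type) : Type
  | out (d : Δ)
  | param (i : ℕ)

/-- Labels for right-hand sides of mtt rules: trees over `Δ ∪ (Q × X) ∪ Y`
(the second component of a call is the index of the input variable `x`). -/
inductive RLab (Δ Q : Type) : Type
  | out (d : Δ)
  | call (q : Q) (x : ℕ)
  | param (i : ℕ)

/-- Labels for "semantic" trees over `Δ ∪ (Q × T_Σ) ∪ Y`. -/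
inductive SLab (Γ Δ Q : Type) : Type
  | out (d : Δ)
  | call (q : Q) (s : RTree Γ)
  | param (i : ℕ)

/-- Trees over `Δ ∪ Y`. -/
abbrev OT (Δ : Type) := RTree (OLab Δ)
/-- Right-hand side trees over `Δ ∪ (Q × X) ∪ Y`. -/
abbrev Rhs (Δ Q : Type) := RTree (RLab Δ Q)
/-- Trees over `Δ ∪ (Q × T_Σ) ∪ Y`. -/
abbrev ST (Γ Δ Q : Type) := RTree (SLab Γ Δ Q)

/-- First-order substitution `x_i := ss_i` on a label of a right-hand side
(indices are 0-based; for well-formed rules the index is always in range). -/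
def RLab.subst {Γ Δ Q : Type} (ss : List (RTree Γ)) : RLab Δ Q → SLab Γ Δ Q
  | .out d => .out d
  | .param i => .param i
  | .call q x =>
    match ss[x]? with
    | some s => .call q s
    | none => .param x

/-- `r[x_1/s_1, …, x_k/s_k]`. -/
def substX {Γ Δ Q : Type} (ss : List (RTree Γ)) (r : Rhs Δ Q) : ST Γ Δ Q :=
  r.map (RLab.subst ss)

/-- Second-order (parameter) substitution `t[y_1/ts_1, …, y_n/ts_n]`
(`y` indices are 0-based). -/
def substY {Δ : Type} (ts : List (OT Δ)) : OT Δ → OT Δ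
  | .node (.param i) _ => ts.getD i (.node (.param i) [])
  | .node (.out d) us => .node (.out d) (us.attach.map (fun x => substY ts x.1))
decreasing_by
  have := List.sizeOf_lt_of_mem x.2
  simp only [RTree.node.sizeOf_spec]
  omega

/-- The embedding of `T_Δ` into the trees over `Δ ∪ Y`. -/
def embed {Δ : Type} (t : RTree Δ) : OT Δ := t.map OLab.out

variable {Γ Δ Q : Type}

/-- IO (call-by-value, inside-out) semantics: `SemIO rsel u t` holds iff
`t ∈ ⟦u⟧_IO`.  The rules of the transducer are given by a selector
`rsel q σ ss`: the set of right-hand sides of the `⟨q,σ⟩`-rules that are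
applicable when the children of the current input node are `ss` (for a plain
mtt this does not depend on `ss`, cf. `plainSel`). -/
inductive SemIO (rsel : Q → Γ → List (RTree Γ) → Set (Rhs Δ Q)) :
    ST Γ Δ Q → OT Δ → Prop
  | param (i : ℕ) :
      SemIO rsel (.node (.param i) []) (.node (.param i) [])
  | out {d : Δ} {us : List (ST Γ Δ Q)} {ts : List (OT Δ)}
      (hlen : ts.length = us.length)
      (h : ∀ i : Fin us.length, SemIO rsel (us.get i) (ts.get (i.cast hlen.symm))) :
      SemIO rsel (.node (.out d) us) (.node (.out d) ts)
  | call {q : Q} {σ : Γ} {ss : List (RTree Γ)} {us : List (ST Γ Δ Q)}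
      {r : Rhs Δ Q} {t₀ : OT Δ} {ts : List (OT Δ)}
      (hr : r ∈ rsel q σ ss)
      (h₀ : SemIO rsel (substX ss r) t₀)
      (hlen : ts.length = us.length)
      (h : ∀ i : Fin us.length, SemIO rsel (us.get i) (ts.get (i.cast hlen.symm))) :
      SemIO rsel (.node (.call q (.node σ ss)) us) (substY ts t₀)

mutual
/-- OI (call-by-name, outside-in) semantics: `SemOI rsel u t` holds iff
`t ∈ ⟦u⟧_OI`. -/
inductive SemOI (rsel : Q → Γ → List (RTree Γ) → Set (Rhs Δ Q)) :
    ST Γ Δ Q → OT Δ → Prop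
  | param (i : ℕ) :
      SemOI rsel (.node (.param i) []) (.node (.param i) [])
  | out {d : Δ} {us : List (ST Γ Δ Q)} {ts : List (OT Δ)}
      (hlen : ts.length = us.length)
      (h : ∀ i : Fin us.length, SemOI rsel (us.get i) (ts.get (i.cast hlen.symm))) :
      SemOI rsel (.node (.out d) us) (.node (.out d) ts)
  | call {q : Q} {σ : Γ} {ss : List (RTree Γ)} {us : List (ST Γ Δ Q)}
      {r : Rhs Δ Q} {t₀ : OT Δ} {t : OT Δ}
      (hr : r ∈ rsel q σ ss)
      (h₀ : SemOI rsel (substX ss r) t₀)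
      (hs : OISub rsel us t₀ t) :
      SemOI rsel (.node (.call q (.node σ ss)) us) t

/-- OI-substitution: `OISub rsel us t₀ t` holds iff `t ∈ (t₀ ←_OI (⟦us_1⟧_OI, …, ⟦us_n⟧_OI))`,
i.e. `t` is obtained from `t₀` by independently replacing every occurrence of a parameter
`y_i` by some member of `⟦us_i⟧_OI`. -/
inductive OISub (rsel : Q → Γ → List (RTree Γ) → Set (Rhs Δ Q)) :
    List (ST Γ Δ Q) → OT Δ → OT Δ → Prop
  | param {us : List (ST Γ Δ Q)} {i : ℕ} {t : OT Δ}
      (h : i < us.length) (hsem : SemOI rsel (us.get ⟨i, h⟩) t) :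
      OISub rsel us (.node (.param i) []) t
  | out {us : List (ST Γ Δ Q)} {d : Δ} {ts ts' : List (OT Δ)}
      (hlen : ts'.length = ts.length)
      (h : ∀ i : Fin ts.length, OISub rsel us (ts.get i) (ts'.get (i.cast hlen.symm))) :
      OISub rsel us (.node (.out d) ts) (.node (.out d) ts')
end

/-- The rule selector of a plain mtt: the applicable rules do not depend on the
child subtrees of the current input node. -/
def plainSel (rules : Q → Γ → Set (Rhs Δ Q)) :
    Q → Γ → List (RTree Γ) → Set (Rhs Δ Q) :=
  fun q σ _ => rules q σ

/-- The translation `τ_{IO,M} ⊆ T_Σ × T_Δ` realized in IO mode. -/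
def tauIO (rankΓ : Γ → ℕ) (rankΔ : Δ → ℕ)
    (rsel : Q → Γ → List (RTree Γ) → Set (Rhs Δ Q)) (q₀ : Q) :
    Set (RTree Γ × RTree Δ) :=
  {p | p.1.Wf rankΓ ∧ p.2.Wf rankΔ ∧
       SemIO rsel (.node (.call q₀ p.1) []) (embed p.2)}

/-- The translation `τ_{OI,M} ⊆ T_Σ × T_Δ` realized in OI mode. -/
def tauOI (rankΓ : Γ → ℕ) (rankΔ : Δ → ℕ)
    (rsel : Q → Γ → List (RTree Γ) → Set (Rhs Δ Q)) (q₀ : Q) :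
    Set (RTree Γ × RTree Δ) :=
  {p | p.1.Wf rankΓ ∧ p.2.Wf rankΔ ∧
       SemOI rsel (.node (.call q₀ p.1) []) (embed p.2)}

/-- Well-formedness of a right-hand side of a rule of an mtt whose current
input symbol has rank `k` and whose current state has rank `m`: output symbols
have the correct number of children, state calls `⟨q', x_i⟩` have `rank q'`
children and `i < k`, and parameters `y_j` satisfy `j < m`. -/
inductive RhsWf (rankΔ : Δ → ℕ) (rankQ : Q → ℕ) (k m : ℕ) : Rhs Δ Q → Prop
  | out {d : Δ} {ts : List (Rhs Δ Q)}
      (hlen : ts.length = rankΔ d) (h : ∀ t ∈ ts, RhsWf rankΔ rankQ k m t) :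
      RhsWf rankΔ rankQ k m (.node (.out d) ts)
  | call {q : Q} {x : ℕ} {ts : List (Rhs Δ Q)}
      (hx : x < k) (hlen : ts.length = rankQ q)
      (h : ∀ t ∈ ts, RhsWf rankΔ rankQ k m t) :
      RhsWf rankΔ rankQ k m (.node (.call q x) ts)
  | param {i : ℕ} (hi : i < m) : RhsWf rankΔ rankQ k m (.node (.param i) [])

/-- Well-formedness of a tree over `Δ ∪ (Q × T_Σ) ∪ Y`. -/
inductive STWf (rankΓ : Γ → ℕ) (rankΔ : Δ → ℕ) (rankQ : Q → ℕ) : ST Γ Δ Q → Prop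
  | out {d : Δ} {ts : List (ST Γ Δ Q)}
      (hlen : ts.length = rankΔ d) (h : ∀ t ∈ ts, STWf rankΓ rankΔ rankQ t) :
      STWf rankΓ rankΔ rankQ (.node (.out d) ts)
  | call {q : Q} {s : RTree Γ} {ts : List (ST Γ Δ Q)}
      (hs : s.Wf rankΓ) (hlen : ts.length = rankQ q)
      (h : ∀ t ∈ ts, STWf rankΓ rankΔ rankQ t) :
      STWf rankΓ rankΔ rankQ (.node (.call q s) ts)
  | param (i : ℕ) : STWf rankΓ rankΔ rankQ (.node (.param i) [])

/-- A tree over `Δ ∪ (Q × T_Σ) ∪ Y` is parameter-free if no `y_i` occurs in it. -/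
inductive NoParam : ST Γ Δ Q → Prop
  | node {l : SLab Γ Δ Q} {ts : List (ST Γ Δ Q)}
      (hl : ∀ i : ℕ, l ≠ .param i) (h : ∀ t ∈ ts, NoParam t) :
      NoParam (.node l ts)

/-- A macro tree transducer `M = (Q, Σ, Δ, q₀, R)`.  The alphabets `Γ` (input),
`Δ` (output) and the set `Q` of states are ranked; `q₀` has rank `0`; `rules q σ`
is the (finite) set `R_{q,σ}` of right-hand sides of the `⟨q,σ⟩`-rules, and every
right-hand side is a well-formed tree over `Δ ∪ (Q × X_k) ∪ Y_m`. -/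
structure MTT (Γ Δ Q : Type) where
  rankΓ : Γ → ℕ
  rankΔ : Δ → ℕ
  rankQ : Q → ℕ
  q₀ : Q
  q₀_rank : rankQ q₀ = 0
  rules : Q → Γ → Set (Rhs Δ Q)
  rules_fin : ∀ q σ, (rules q σ).Finite
  rules_wf : ∀ q σ, ∀ r ∈ rules q σ, RhsWf rankΔ rankQ (rankΓ σ) (rankQ q) r

/-- The rule selector of a plain mtt. -/
def MTT.sel (M : MTT Γ Δ Q) : Q → Γ → List (RTree Γ) → Set (Rhs Δ Q) :=
  plainSel M.rules

end MttF
namespace MttF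

/-- Labels for the trees over `Δ ∪ Y ∪ Z` occurring in the right-hand sides of
rules of multi-return mtts: output symbols, parameters `y_i`, and let-variables
`z_i` (all indices 0-based). -/
inductive MLab (Δ : Type) : Type
  | out (d : Δ)
  | param (i : ℕ)
  | lvar (i : ℕ)

/-- Trees over `Δ ∪ Y ∪ Z`. -/
abbrev MT (Δ : Type) := RTree (MLab Δ)

/-- A right-hand side of a rule of a multi-return mtt: a sequence of
let-bindings `let (z_j,…,z_{j+D(q')-1}) = ⟨q', x_i⟩(u_1,…,u_n) in …` followed by
a final tuple `(w_1,…,w_e)`. -/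
inductive MRhs (Δ Q : Type) : Type
  | ret (ws : List (MT Δ))
  | lett (j : ℕ) (q : Q) (x : ℕ) (us : List (MT Δ)) (rest : MRhs Δ Q)

/-- Substitution of the parameters: `w[y_1/us_1, …, y_n/us_n]`. -/
def substYM {Δ : Type} (us : List (MT Δ)) : MT Δ → MT Δ
  | .node (.param i) _ => us.getD i (.node (.param i) [])
  | .node (.lvar i) _ => .node (.lvar i) []
  | .node (.out d) ts => .node (.out d) (ts.attach.map (fun x => substYM us x.1))
decreasing_by
  have := List.sizeOf_lt_of_mem x.2
  simp only [RTree.node.sizeOf_spec]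
  omega

/-- Substitution of the let-variables `z_j, …, z_{j+d-1}` bound by a `let`:
`ξ[z_j/zs_1, …, z_{j+d-1}/zs_d]`. -/
def substZ {Δ : Type} (j : ℕ) (zs : List (MT Δ)) : MT Δ → MT Δ
  | .node (.lvar i) _ =>
      if j ≤ i ∧ i < j + zs.length then zs.getD (i - j) (.node (.lvar i) [])
      else .node (.lvar i) []
  | .node (.param i) _ => .node (.param i) []
  | .node (.out d) ts => .node (.out d) (ts.attach.map (fun x => substZ j zs x.1))
decreasing_by
  have := List.sizeOf_lt_of_mem x.2
  simp only [RTree.node.sizeOf_spec]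
  omega

/-- The IO-semantics of multi-return mtts: `SemMR D rules env κ ξ` holds iff
`ξ ∈ ⟦κ[x_1/env_1, …, x_k/env_k]⟧_IO` (the substitution of the input variables
is performed lazily via the environment `env`).  Since the semantics of a tree
over `Δ ∪ Y ∪ Z` is the singleton of that tree, a final tuple evaluates to
itself; a `let` evaluates the state call on the input subtree `env_x` with the
argument trees substituted for the parameters (IO-substitution), and
substitutes the resulting tuple for the bound `z`-variables in the value of the
body. -/
inductive SemMR {Γ Δ Q : Type} (D : Q → ℕ) (rules : Q → Γ → Set (MRhs Δ Q)) :
    List (RTree Γ) → MRhs Δ Q → List (MT Δ) → Prop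
  | ret {env : List (RTree Γ)} {ws : List (MT Δ)} :
      SemMR D rules env (.ret ws) ws
  | lett {env : List (RTree Γ)} {j : ℕ} {q : Q} {x : ℕ} {us : List (MT Δ)}
      {rest : MRhs Δ Q} {σ : Γ} {ss : List (RTree Γ)} {r : MRhs Δ Q}
      {ws ξs : List (MT Δ)}
      (hx : env[x]? = some (.node σ ss))
      (hr : r ∈ rules q σ)
      (hws : SemMR D rules ss r ws)
      (hξ : SemMR D rules env rest ξs) :
      SemMR D rules env (.lett j q x us rest)
        (ξs.map (substZ j (ws.map (substYM us))))

/-- The embedding of `T_Δ` into the trees over `Δ ∪ Y ∪ Z`. -/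
def embedM {Δ : Type} (t : RTree Δ) : MT Δ := t.map MLab.out

/-- The translation `τ_{IO,M} = {(s,t) | t ∈ ⟦let z = ⟨q0,s⟩() in z⟧_IO}`
realized by a multi-return mtt. -/
def tauMR {Γ Δ Q : Type} (rankΓ : Γ → ℕ) (rankΔ : Δ → ℕ) (D : Q → ℕ)
    (rules : Q → Γ → Set (MRhs Δ Q)) (q₀ : Q) : Set (RTree Γ × RTree Δ) :=
  {p | p.1.Wf rankΓ ∧ p.2.Wf rankΔ ∧
    SemMR D rules [p.1] (.lett 0 q₀ 0 [] (.ret [.node (.lvar 0) []]))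
      [embedM p.2]}

end MttF
namespace MttF

/-- A fixed effective encoding of lists of naturals. -/
def encodeList : List ℕ → ℕ
  | [] => 0
  | x :: xs => Nat.pair x (encodeList xs) + 1

/-- A fixed effective encoding of trees into `ℕ`, given an encoding of the labels. -/
def encodeTree {α : Type} (encL : α → ℕ) : RTree α → ℕ
  | .node a ts =>
      Nat.pair (encL a) (encodeList (ts.attach.map (fun x => encodeTree encL x.1)))
decreasing_by
  have := List.sizeOf_lt_of_mem x.2
  simp only [RTree.node.sizeOf_spec]
  omega

end MttF

namespace MttF

/-- Well-formedness of a tree over `Δ ∪ Y_m ∪ Z` in which exactly the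
let-variables with indices in `Z` are in scope. -/
inductive MTWf {Δ : Type} (rankΔ : Δ → ℕ) (m : ℕ) (Z : Set ℕ) : MT Δ → Prop
  | out {d : Δ} {ts : List (MT Δ)}
      (hlen : ts.length = rankΔ d) (h : ∀ u ∈ ts, MTWf rankΔ m Z u) :
      MTWf rankΔ m Z (.node (.out d) ts)
  | param {i : ℕ} (hi : i < m) : MTWf rankΔ m Z (.node (.param i) [])
  | lvar {i : ℕ} (hi : i ∈ Z) : MTWf rankΔ m Z (.node (.lvar i) [])

/-- Well-formedness of a right-hand side of a rule of a multi-return mtt for an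
input symbol of rank `k`, a state of rank `m` and dimension `e`, with the
let-variables in `Z` already bound: every `let` binds `D q'` fresh variables,
passes `rank q'` argument trees that only use variables in scope, and the final
tuple has exactly `e` components. -/
inductive MRhsWf {Δ Q : Type} (rankΔ : Δ → ℕ) (rankQ : Q → ℕ) (D : Q → ℕ)
    (k m e : ℕ) : Set ℕ → MRhs Δ Q → Prop
  | ret {Z : Set ℕ} {ws : List (MT Δ)}
      (hlen : ws.length = e) (h : ∀ w ∈ ws, MTWf rankΔ m Z w) :
      MRhsWf rankΔ rankQ D k m e Z (.ret ws)
  | lett {Z : Set ℕ} {j : ℕ} {q : Q} {x : ℕ} {us : List (MT Δ)} {rest : MRhs Δ Q}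
      (hx : x < k) (hus : us.length = rankQ q)
      (h : ∀ u ∈ us, MTWf rankΔ m Z u)
      (hfresh : ∀ i < D q, j + i ∉ Z)
      (hrest : MRhsWf rankΔ rankQ D k m e (Z ∪ {i' | ∃ i < D q, i' = j + i}) rest) :
      MRhsWf rankΔ rankQ D k m e Z (.lett j q x us rest)

/-- A multi-return macro tree transducer `M = (Q,Σ,Δ,q0,R,D)`. -/
structure MRMTT (Γ Δ Q : Type) where
  rankΓ : Γ → ℕ
  rankΔ : Δ → ℕ
  rankQ : Q → ℕ
  dim : Q → ℕ
  q₀ : Q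
  q₀_rank : rankQ q₀ = 0
  q₀_dim : dim q₀ = 1
  rules : Q → Γ → Set (MRhs Δ Q)
  rules_fin : ∀ q σ, (rules q σ).Finite
  rules_wf : ∀ q σ, ∀ r ∈ rules q σ,
      MRhsWf rankΔ rankQ dim (rankΓ σ) (rankQ q) (dim q) ∅ r

/-!
Inside-out evaluation is call-by-value, so a state call `⟨q, s⟩` has only finitely many value
tuples, and they are determined bottom-up by those of the calls on the children of `s`: the
finitely many rules are evaluated over the finitely many value tuples already computed for the
children. The decision procedure runs this bottom-up evaluation on tree codes. Since the codes
of the children of a node are smaller than the code of the node, it is a course-of-values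
recursion, hence primitive recursive; the finitely many symbols, states and rules only enter
as constants of finite case distinctions. Finally, `(s, t)` is in the translation iff both trees
are well formed and the code of `t` is a value of `let z = ⟨q₀, s⟩() in z`.
-/

namespace RTree

variable {α β : Type}

@[elab_as_elim]
theorem ind {motive : RTree α → Prop}
    (node : ∀ a ts, (∀ t ∈ ts, motive t) → motive (.node a ts)) : ∀ t, motive t
  | .node a ts => node a ts fun t _ => ind node t

theorem map_node (f : α → β) (a : α) (ts : List (RTree α)) :
    (RTree.node a ts).map f = .node (f a) (ts.map (map f)) := by
  rw [map, List.attach_map_val]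

theorem wf_node_iff {rk : α → ℕ} {a : α} {ts : List (RTree α)} :
    (node a ts).Wf rk ↔ ts.length = rk a ∧ ∀ t ∈ ts, t.Wf rk :=
  ⟨fun | .node hlen h => ⟨hlen, h⟩, fun ⟨hlen, h⟩ => .node hlen h⟩

end RTree

section Coding

variable {α β σ : Type}

theorem encodeTree_node (e : α → ℕ) (a : α) (ts : List (RTree α)) :
    encodeTree e (.node a ts) = Nat.pair (e a) (encodeList (ts.map (encodeTree e))) := by
  rw [encodeTree, List.attach_map_val]

theorem encodeTree_map (e : β → ℕ) (f : α → β) (t : RTree α) :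
    encodeTree e (t.map f) = encodeTree (e ∘ f) t := by
  induction t using RTree.ind with
  | node a ts ih =>
    rw [RTree.map_node, encodeTree_node, encodeTree_node, List.map_map]
    exact congrArg (Nat.pair _ ∘ encodeList) (List.map_congr_left ih)

def decodeList : ℕ → List ℕ
  | 0 => []
  | n + 1 => (Nat.unpair n).1 :: decodeList (Nat.unpair n).2
decreasing_by exact Nat.lt_succ_of_le (Nat.unpair_right_le n)

theorem decodeList_encodeList (l : List ℕ) : decodeList (encodeList l) = l := by
  induction l with
  | nil => rw [encodeList, decodeList]
  | cons x xs ih => rw [encodeList, decodeList, Nat.unpair_pair, ih]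

theorem encodeList_injective : Function.Injective encodeList :=
  Function.LeftInverse.injective decodeList_encodeList

theorem lt_of_mem_decodeList {n c : ℕ} (h : c ∈ decodeList n) : c < n := by
  induction n using Nat.strong_induction_on with
  | _ n ih =>
    match n, h with
    | 0, h => simp [decodeList] at h
    | m + 1, h =>
      rw [decodeList, List.mem_cons] at h
      have hm : (Nat.unpair m).2 < m + 1 := Nat.lt_succ_of_le (Nat.unpair_right_le m)
      rcases h with rfl | h
      · exact Nat.lt_succ_of_le (Nat.unpair_left_le m)
      · exact (ih _ hm h).trans hm

theorem encodeTree_injective {e : α → ℕ} (he : Function.Injective e) :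
    Function.Injective (encodeTree e) := by
  intro t
  induction t using RTree.ind with
  | node a ts ih =>
    rintro ⟨b, us⟩ h
    rw [encodeTree_node, encodeTree_node] at h
    obtain ⟨hab, hts⟩ := Nat.pair_eq_pair.1 h
    have hmap := encodeList_injective hts
    have hlen : ts.length = us.length := by simpa using congrArg List.length hmap
    rw [he hab, List.ext_getElem hlen fun i h₁ h₂ => ih _ (List.getElem_mem h₁) <| by
      simpa [List.getElem?_eq_getElem h₁, List.getElem?_eq_getElem h₂] using
        congrArg (·[i]?) hmap]

def treeRec (step : ℕ → List σ → σ) (n : ℕ) : σ :=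
  step (Nat.unpair n).1 ((decodeList (Nat.unpair n).2).attach.map fun c => treeRec step c.1)
termination_by n
decreasing_by exact (lt_of_mem_decodeList c.2).trans_le (Nat.unpair_right_le n)

theorem treeRec_eq (step : ℕ → List σ → σ) (n : ℕ) :
    treeRec step n = step (Nat.unpair n).1 ((decodeList (Nat.unpair n).2).map (treeRec step)) := by
  rw [treeRec, List.attach_map_val]

theorem treeRec_encodeTree_node (step : ℕ → List σ → σ) (e : α → ℕ) (a : α)
    (ts : List (RTree α)) :
    treeRec step (encodeTree e (.node a ts)) =
      step (e a) (ts.map fun t => treeRec step (encodeTree e t)) := by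
  rw [treeRec_eq, encodeTree_node, Nat.unpair_pair, decodeList_encodeList, List.map_map]
  rfl

theorem treeRec_encodeTree_eq {step : ℕ → List σ → σ} {e : α → ℕ} {F : RTree α → σ}
    (hF : ∀ a ts, step (e a) (ts.map F) = F (.node a ts)) (t : RTree α) :
    treeRec step (encodeTree e t) = F t := by
  induction t using RTree.ind with
  | node a ts ih => rw [treeRec_encodeTree_node, List.map_congr_left ih, hF]

end Coding

section CodingPrimrec

open Primrec

variable {ι β σ : Type}

theorem encodeList_primrec : Primrec encodeList :=
  (list_foldr .id (const 0)
    (succ.comp (Primrec₂.natPair.comp (fst.comp snd) (snd.comp snd))).to₂).of_eq fun l => by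
      induction l with
      | nil => rfl
      | cons x xs ih => exact congrArg (fun r => Nat.pair x r + 1) ih

theorem decodeList_primrec : Primrec decodeList := by
  refine (nat_strong_rec (fun (_ : Unit) => decodeList) (g := fun _ l =>
    some (if l.length = 0 then [] else
      (Nat.unpair (l.length - 1)).1 :: l.getD (Nat.unpair (l.length - 1)).2 [])) ?_ ?_).comp
    (const ()) .id
  · have hm : Primrec fun p : Unit × List (List ℕ) => Nat.unpair (p.2.length - 1) :=
      unpair.comp (nat_sub.comp (list_length.comp snd) (const 1))
    exact option_some.comp <| ite (Primrec.eq.comp (list_length.comp snd) (const 0)) (const []) <|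
      list_cons.comp (fst.comp hm) ((list_getD []).comp snd (snd.comp hm))
  · rintro - (_ | m)
    · simp [decodeList]
    · have hm : (Nat.unpair m).2 < m + 1 := Nat.lt_succ_of_le (Nat.unpair_right_le m)
      simp [decodeList, List.getD_eq_getElem?_getD, hm]

theorem treeRec_primrec₂ [Primcodable β] [Primcodable σ] [Inhabited σ]
    {step : β → ℕ → List σ → σ}
    (hstep : Primrec fun p : β × ℕ × List σ => step p.1 p.2.1 p.2.2) :
    Primrec₂ fun b => treeRec (step b) := by
  refine nat_strong_rec _ (g := fun b l => some (step b (Nat.unpair l.length).1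
    ((decodeList (Nat.unpair l.length).2).map fun c => l.getD c default))) ?_ fun b n => ?_
  · have hn : Primrec fun p : β × List σ => Nat.unpair p.2.length :=
      unpair.comp (list_length.comp snd)
    exact option_some.comp <| hstep.comp <| pair fst <| pair (fst.comp hn) <|
      list_map (decodeList_primrec.comp (snd.comp hn))
        ((list_getD default).comp (snd.comp fst) snd).to₂
  · have hc : ∀ c ∈ decodeList (Nat.unpair n).2, c < n := fun c hc =>
      (lt_of_mem_decodeList hc).trans_le (Nat.unpair_right_le n)
    rw [treeRec_eq, List.length_map, List.length_range]
    congr 2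
    exact List.map_congr_left fun c h => by simp [List.getD_eq_getElem?_getD, hc c h]

theorem treeRec_primrec [Primcodable σ] [Inhabited σ] {step : ℕ → List σ → σ}
    (hstep : Primrec₂ step) : Primrec (treeRec step) :=
  (treeRec_primrec₂ (step := fun (_ : Unit) => step)
    (hstep.comp (fst.comp snd) (snd.comp snd))).comp (const ()) .id

theorem _root_.Primrec.list_map_fixed [Primcodable β] [Primcodable σ] (L : List ι)
    {f : ι → β → σ} (hf : ∀ i, Primrec (f i)) : Primrec fun b => L.map fun i => f i b := by
  induction L with
  | nil => exact const []
  | cons i L ih => exact list_cons.comp (hf i) ih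

end CodingPrimrec

section CaseOnCode

variable {ι β σ : Type}

def caseOnCode (code : ι → ℕ) (L : List ι) (f : ι → β → σ) (d : σ) (l : ℕ)
    (b : β) : σ :=
  (L.map fun i => f i b).getD ((L.map code).idxOf l) d

theorem caseOnCode_code {code : ι → ℕ} (hcode : Function.Injective code) {L : List ι} {i : ι}
    (hi : i ∈ L) (f : ι → β → σ) (d : σ) (b : β) :
    caseOnCode code L f d (code i) b = f i b := by
  have hk : (L.map code).idxOf (code i) < (L.map code).length :=
    List.idxOf_lt_length_of_mem (List.mem_map_of_mem hi)
  have hLk : L[(L.map code).idxOf (code i)]'(by simpa using hk) = i :=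
    hcode <| (List.getElem_map code).symm.trans (List.getElem_idxOf hk)
  rw [caseOnCode, List.getD_eq_getElem _ _ (by simpa using hk), List.getElem_map, hLk]

theorem caseOnCode_primrec [Primcodable β] [Primcodable σ] (code : ι → ℕ) (L : List ι)
    {f : ι → β → σ} (hf : ∀ i, Primrec (f i)) (d : σ) :
    Primrec₂ (caseOnCode code L f d) :=
  (Primrec.list_getD d).comp ((Primrec.list_map_fixed L hf).comp Primrec.snd)
    (Primrec.list_idxOf.comp Primrec.fst (Primrec.const (L.map code)))

end CaseOnCode

section WfCheck

variable {α : Type} [Fintype α]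

noncomputable def wfCheck (e rk : α → ℕ) : ℕ → Bool :=
  treeRec <| caseOnCode e Finset.univ.toList
    (fun a bs => decide (bs.length = rk a ∧ ∀ b ∈ bs, b = true)) false

theorem wfCheck_encodeTree {e : α → ℕ} (he : Function.Injective e) (rk : α → ℕ)
    (t : RTree α) : wfCheck e rk (encodeTree e t) = true ↔ t.Wf rk := by
  classical
  rw [wfCheck, treeRec_encodeTree_eq (F := fun t => decide (t.Wf rk)), decide_eq_true_iff]
  intro a ts
  rw [caseOnCode_code he (Finset.mem_toList.2 (Finset.mem_univ a))]
  simp [RTree.wf_node_iff]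

theorem wfCheck_primrec (e rk : α → ℕ) : Primrec (wfCheck e rk) :=
  treeRec_primrec <| caseOnCode_primrec _ _ (fun a =>
    (PrimrecPred.and (Primrec.eq.comp Primrec.list_length (Primrec.const (rk a)))
      (PrimrecPred.forall_mem_list (Primrec.eq.comp .id (Primrec.const true)))).decide) false

end WfCheck

section Recode

variable {α : Type}

def recodeLabels (g : ℕ → ℕ) : ℕ → ℕ :=
  treeRec fun l cs => Nat.pair (g l) (encodeList cs)

theorem recodeLabels_encodeTree (g : ℕ → ℕ) (e : α → ℕ) (t : RTree α) :
    recodeLabels g (encodeTree e t) = encodeTree (g ∘ e) t :=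
  treeRec_encodeTree_eq (fun a ts => by rw [encodeTree_node]; rfl) t

theorem recodeLabels_primrec {g : ℕ → ℕ} (hg : Primrec g) : Primrec (recodeLabels g) :=
  treeRec_primrec <| Primrec₂.natPair.comp (hg.comp .fst) (encodeList_primrec.comp .snd)

end Recode

section MTCodes

variable {Δ : Type} [Encodable Δ]

/-- The code-level substitutions below tell the kind of a label from its code mod `3`. -/
def encodeMLab : MLab Δ → ℕ
  | .out d => 3 * Encodable.encode d
  | .param i => 3 * i + 1
  | .lvar i => 3 * i + 2

theorem encodeMLab_injective : Function.Injective (encodeMLab (Δ := Δ)) := by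
  rintro (d | i | i) (d' | i' | i') h <;> simp only [encodeMLab] at h <;>
    first
    | omega
    | (congr 1; omega)
    | (congr 1; exact Encodable.encode_injective (by omega))

def encodeMT : MT Δ → ℕ := encodeTree encodeMLab

theorem encodeMT_injective : Function.Injective (encodeMT (Δ := Δ)) :=
  encodeTree_injective encodeMLab_injective

theorem encodeMT_leaf (a : MLab Δ) : encodeMT (.node a []) = Nat.pair (encodeMLab a) 0 := by
  rw [encodeMT, encodeTree_node]; rfl

theorem encodeMT_embedM (t : RTree Δ) :
    encodeMT (embedM t) = recodeLabels (3 * ·) (encodeTree Encodable.encode t) := by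
  rw [encodeMT, embedM, encodeTree_map, recodeLabels_encodeTree]; rfl

def substLeavesC (leaf : ℕ → ℕ) : ℕ → ℕ :=
  treeRec fun l cs => if l % 3 = 0 then Nat.pair l (encodeList cs) else leaf l

theorem substLeavesC_encodeMT {leaf : ℕ → ℕ} {F : MT Δ → MT Δ}
    (hout : ∀ d ts, F (.node (.out d) ts) = .node (.out d) (ts.map F))
    (hleaf : ∀ a ts, (∀ d, a ≠ .out d) → encodeMT (F (.node a ts)) = leaf (encodeMLab a))
    (w : MT Δ) : substLeavesC leaf (encodeMT w) = encodeMT (F w) := by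
  refine treeRec_encodeTree_eq (F := encodeMT ∘ F) (fun a ts => ?_) w
  cases a with
  | out d =>
    rw [if_pos (by simp [encodeMLab]), Function.comp_apply, hout, encodeMT, encodeTree_node,
      List.map_map]
  | param i => rw [if_neg (by simp [encodeMLab]), Function.comp_apply, hleaf _ _ (by simp)]
  | lvar i => rw [if_neg (by simp [encodeMLab]), Function.comp_apply, hleaf _ _ (by simp)]

theorem substLeavesC_primrec₂ {β : Type} [Primcodable β] {leaf : β → ℕ → ℕ}
    (hleaf : Primrec₂ leaf) : Primrec₂ fun b => substLeavesC (leaf b) := by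
  refine treeRec_primrec₂ (step := fun b l cs =>
    if l % 3 = 0 then Nat.pair l (encodeList cs) else leaf b l) ?_
  have hl : Primrec fun p : β × ℕ × List ℕ => p.2.1 := Primrec.fst.comp .snd
  exact Primrec.ite (Primrec.eq.comp (Primrec.nat_mod.comp hl (.const 3)) (.const 0))
    (Primrec₂.natPair.comp hl (encodeList_primrec.comp (Primrec.snd.comp .snd)))
    (hleaf.comp .fst hl)

def substYC (us : List ℕ) : ℕ → ℕ :=
  substLeavesC fun l => if l % 3 = 1 then us.getD (l / 3) (Nat.pair l 0) else Nat.pair l 0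

def substZC (j : ℕ) (zs : List ℕ) : ℕ → ℕ :=
  substLeavesC fun l =>
    if l % 3 = 2 ∧ j ≤ l / 3 ∧ l / 3 < j + zs.length then zs.getD (l / 3 - j) (Nat.pair l 0)
    else Nat.pair l 0

theorem substYC_encodeMT (us : List (MT Δ)) (w : MT Δ) :
    substYC (us.map encodeMT) (encodeMT w) = encodeMT (substYM us w) := by
  refine substLeavesC_encodeMT (fun d ts => ?_) (fun a ts ha => ?_) w
  · rw [substYM, List.attach_map_val]
  · rcases a with d | i | i
    · exact absurd rfl (ha d)
    · have hleaf : Nat.pair (3 * i + 1) 0 = encodeMT (.node (.param i) ([] : List (MT Δ))) :=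
        (encodeMT_leaf (.param i)).symm
      rw [substYM, encodeMLab, if_pos (by omega), (by omega : (3 * i + 1) / 3 = i), hleaf,
        List.getD_map]
    · rw [substYM, encodeMLab, if_neg (by omega), encodeMT_leaf]; rfl

theorem substZC_encodeMT (j : ℕ) (zs : List (MT Δ)) (w : MT Δ) :
    substZC j (zs.map encodeMT) (encodeMT w) = encodeMT (substZ j zs w) := by
  refine substLeavesC_encodeMT (fun d ts => ?_) (fun a ts ha => ?_) w
  · rw [substZ, List.attach_map_val]
  · rcases a with d | i | i
    · exact absurd rfl (ha d)
    · rw [substZ, encodeMLab, if_neg (by omega), encodeMT_leaf]; rfl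
    · have hi : (3 * i + 2) / 3 = i := by omega
      rw [substZ, encodeMLab, hi, List.length_map]
      by_cases h : j ≤ i ∧ i < j + zs.length
      · have hleaf : Nat.pair (3 * i + 2) 0 = encodeMT (.node (.lvar i) ([] : List (MT Δ))) :=
          (encodeMT_leaf (.lvar i)).symm
        rw [if_pos h, if_pos ⟨by omega, h⟩, hleaf, List.getD_map]
      · rw [if_neg h, if_neg (by omega), encodeMT_leaf]; rfl

section

open Primrec

theorem substYC_primrec : Primrec₂ substYC := by
  refine substLeavesC_primrec₂ ?_
  have hi : Primrec fun p : List ℕ × ℕ => p.2 / 3 := nat_div.comp snd (const 3)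
  exact ite (Primrec.eq.comp (nat_mod.comp snd (const 3)) (const 1))
    (option_getD.comp (list_getElem?.comp fst hi) (Primrec₂.natPair.comp snd (const 0)))
    (Primrec₂.natPair.comp snd (const 0))

theorem substZC_primrec : Primrec₂ fun p : ℕ × List ℕ => substZC p.1 p.2 := by
  refine substLeavesC_primrec₂ (leaf := fun (p : ℕ × List ℕ) l =>
    if l % 3 = 2 ∧ p.1 ≤ l / 3 ∧ l / 3 < p.1 + p.2.length then
      p.2.getD (l / 3 - p.1) (Nat.pair l 0) else Nat.pair l 0) ?_
  have hi : Primrec fun q : (ℕ × List ℕ) × ℕ => q.2 / 3 := nat_div.comp snd (const 3)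
  have hj : Primrec fun q : (ℕ × List ℕ) × ℕ => q.1.1 := fst.comp fst
  have hzs : Primrec fun q : (ℕ × List ℕ) × ℕ => q.1.2 := snd.comp fst
  exact ite ((Primrec.eq.comp (nat_mod.comp snd (const 3)) (const 2)).and
      ((nat_le.comp hj hi).and (nat_lt.comp hi (nat_add.comp hj (list_length.comp hzs)))))
    (option_getD.comp (list_getElem?.comp hzs (nat_sub.comp hi hj))
      (Primrec₂.natPair.comp snd (const 0)))
    (Primrec₂.natPair.comp snd (const 0))

end

end MTCodes

section Semantics

variable {Γ Δ Q : Type} {D : Q → ℕ} {rules : Q → Γ → Set (MRhs Δ Q)}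
  {env : List (RTree Γ)}

theorem semMR_ret_iff {ws ξs : List (MT Δ)} : SemMR D rules env (.ret ws) ξs ↔ ξs = ws :=
  ⟨fun | .ret => rfl, fun h => h ▸ .ret⟩

theorem semMR_lett_iff {j : ℕ} {q : Q} {x : ℕ} {us : List (MT Δ)} {rest : MRhs Δ Q}
    {ζs : List (MT Δ)} :
    SemMR D rules env (.lett j q x us rest) ζs ↔
      ∃ σ ss, env[x]? = some (.node σ ss) ∧
        ∃ r ∈ rules q σ, ∃ ws, SemMR D rules ss r ws ∧
        ∃ ξs, SemMR D rules env rest ξs ∧ ζs = ξs.map (substZ j (ws.map (substYM us))) := by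
  constructor
  · rintro (_ | ⟨hx, hr, hws, hξ⟩)
    exact ⟨_, _, hx, _, hr, _, hws, _, hξ, rfl⟩
  · rintro ⟨σ, ss, hx, r, hr, ws, hws, ξs, hξ, rfl⟩
    exact .lett hx hr hws hξ

end Semantics

section ValueTables

variable {Γ Δ Q : Type} [Fintype Q] [Encodable Δ]

/-- At position `stateIdx q`, the value tuples of a call of `q`, each one given by the list of
the codes of its components. -/
abbrev ValueTable := List (List (List ℕ))

noncomputable def stateList : List Q := Finset.univ.toList

noncomputable def stateIdx (q : Q) : ℕ := by
  classical exact stateList.idxOf q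

theorem getD_map_stateList_stateIdx {β : Type} (f : Q → List β) (q : Q) :
    (stateList.map f).getD (stateIdx q) [] = f q := by
  classical
  simp only [stateIdx, stateList]
  rw [List.getD_eq_getElem?_getD, List.getElem?_map,
    List.getElem?_idxOf (Finset.mem_toList.2 (Finset.mem_univ q))]
  rfl

def letValueC (j : ℕ) (us w ξ : List ℕ) : List ℕ :=
  ξ.map (substZC j (w.map (substYC us)))

theorem letValueC_encodeMT (j : ℕ) (us ws ξs : List (MT Δ)) :
    letValueC j (us.map encodeMT) (ws.map encodeMT) (ξs.map encodeMT) =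
      (ξs.map (substZ j (ws.map (substYM us)))).map encodeMT := by
  have hws : (ws.map encodeMT).map (substYC (us.map encodeMT)) =
      (ws.map (substYM us)).map encodeMT :=
    (List.map_map ..).trans <| (List.map_congr_left fun w _ => substYC_encodeMT us w).trans
      (List.map_map ..).symm
  rw [letValueC, hws]
  exact (List.map_map ..).trans <| (List.map_congr_left fun ξ _ => substZC_encodeMT j _ ξ).trans
    (List.map_map ..).symm

theorem letValueC_primrec (j : ℕ) (us : List ℕ) : Primrec₂ (letValueC j us) := by
  have hw : Primrec fun w : List ℕ => w.map (substYC us) :=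
    Primrec.list_map .id (substYC_primrec.comp (.const us) .snd).to₂
  have hz : Primrec₂ fun (p : List ℕ × List ℕ) c => substZC j (p.1.map (substYC us)) c :=
    substZC_primrec.comp (Primrec.pair (.const j) (hw.comp (Primrec.fst.comp .fst))) .snd
  exact Primrec.list_map .snd hz

noncomputable def evalRhsC (tbls : List ValueTable) : MRhs Δ Q → List (List ℕ)
  | .ret ws => [ws.map encodeMT]
  | .lett j q x us rest =>
    ((tbls.getD x []).getD (stateIdx q) []).flatMap fun w =>
      (evalRhsC tbls rest).map (letValueC j (us.map encodeMT) w)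

theorem evalRhsC_primrec (r : MRhs Δ Q) :
    Primrec fun tbls : List ValueTable => evalRhsC tbls r := by
  induction r with
  | ret ws => exact Primrec.const _
  | lett j q x us rest ih =>
    exact Primrec.list_flatMap
      ((Primrec.list_getD []).comp ((Primrec.list_getD []).comp .id (.const x)) (.const _))
      (Primrec.list_map (ih.comp .fst)
        ((letValueC_primrec j _).comp (Primrec.snd.comp .fst) .snd).to₂)

def IsValueTable (D : Q → ℕ) (rules : Q → Γ → Set (MRhs Δ Q)) (s : RTree Γ)
    (tbl : ValueTable) : Prop :=
  ∀ q v, v ∈ tbl.getD (stateIdx q) [] ↔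
    ∃ r ∈ rules q s.label, ∃ ws, SemMR D rules s.children r ws ∧ ws.map encodeMT = v

theorem mem_evalRhsC_iff {D : Q → ℕ} {rules : Q → Γ → Set (MRhs Δ Q)}
    {tbl : RTree Γ → ValueTable} {env : List (RTree Γ)}
    (henv : ∀ u ∈ env, IsValueTable D rules u (tbl u)) (r : MRhs Δ Q) (v : List ℕ) :
    v ∈ evalRhsC (env.map tbl) r ↔
      ∃ ξs, SemMR D rules env r ξs ∧ ξs.map encodeMT = v := by
  induction r generalizing v with
  | ret ws => simp [evalRhsC, semMR_ret_iff, eq_comm]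
  | lett j q x us rest ih =>
    simp only [evalRhsC, List.mem_flatMap, List.mem_map, semMR_lett_iff]
    have htx : (env.map tbl).getD x [] = (env[x]?.map tbl).getD [] := by
      rw [List.getD_eq_getElem?_getD, List.getElem?_map]
    rw [htx]
    rcases hx : env[x]? with _ | ⟨σ, ss⟩
    · simp
    · have htbl := henv _ (List.mem_of_getElem? hx)
      simp only [Option.map_some, Option.getD_some, Option.some.injEq, RTree.node.injEq]
      constructor
      · rintro ⟨w, hw, ξ, hξ, rfl⟩
        obtain ⟨r, hr, ws, hws, rfl⟩ := (htbl q w).1 hw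
        obtain ⟨ξs, hξs, rfl⟩ := (ih ξ).1 hξ
        exact ⟨_, ⟨σ, ss, ⟨rfl, rfl⟩, r, hr, ws, hws, ξs, hξs, rfl⟩,
          (letValueC_encodeMT j us ws ξs).symm⟩
      · rintro ⟨_, ⟨σ, ss, ⟨rfl, rfl⟩, r, hr, ws, hws, ξs, hξs, rfl⟩, rfl⟩
        exact ⟨_, (htbl q _).2 ⟨r, hr, ws, hws, rfl⟩, _, (ih _).2 ⟨ξs, hξs, rfl⟩,
          letValueC_encodeMT j us ws ξs⟩

end ValueTables

section Transducer

variable {Γ Δ Q : Type} [Fintype Q] [Encodable Δ]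
  (rules : Q → Γ → Set (MRhs Δ Q)) (hfin : ∀ q σ, (rules q σ).Finite)

noncomputable def ruleList (q : Q) (σ : Γ) : List (MRhs Δ Q) := (hfin q σ).toFinset.toList

noncomputable def nodeTable (σ : Γ) (tbls : List ValueTable) : ValueTable :=
  stateList.map fun q => (ruleList rules hfin q σ).flatMap (evalRhsC tbls)

theorem nodeTable_primrec (σ : Γ) : Primrec (nodeTable rules hfin σ) :=
  Primrec.list_map_fixed _ fun _ =>
    Primrec.list_flatten.comp (Primrec.list_map_fixed _ fun r => evalRhsC_primrec r)

variable [Fintype Γ] [Encodable Γ]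

noncomputable def valueTable : ℕ → ValueTable :=
  treeRec <| caseOnCode Encodable.encode Finset.univ.toList (nodeTable rules hfin) []

theorem valueTable_encodeTree_node (σ : Γ) (ss : List (RTree Γ)) :
    valueTable rules hfin (encodeTree Encodable.encode (.node σ ss)) =
      nodeTable rules hfin σ
        (ss.map fun s => valueTable rules hfin (encodeTree Encodable.encode s)) := by
  rw [valueTable, treeRec_encodeTree_node,
    caseOnCode_code Encodable.encode_injective (Finset.mem_toList.2 (Finset.mem_univ σ))]

theorem isValueTable_valueTable (D : Q → ℕ) (s : RTree Γ) :
    IsValueTable D rules s (valueTable rules hfin (encodeTree Encodable.encode s)) := by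
  induction s using RTree.ind with
  | node σ ss ih =>
    intro q v
    rw [valueTable_encodeTree_node, nodeTable, getD_map_stateList_stateIdx, List.mem_flatMap]
    simp only [ruleList, Finset.mem_toList, Set.Finite.mem_toFinset, mem_evalRhsC_iff ih,
      RTree.label, RTree.children]

theorem valueTable_primrec : Primrec (valueTable rules hfin) :=
  treeRec_primrec <| caseOnCode_primrec _ _ (nodeTable_primrec rules hfin) []

end Transducer

section Decision

variable {Γ Δ Q : Type} [Fintype Γ] [Fintype Δ] [Fintype Q] [Encodable Γ] [Encodable Δ]

noncomputable def tauCheck (M : MRMTT Γ Δ Q) (n : ℕ) : Bool :=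
  wfCheck Encodable.encode M.rankΓ n.unpair.1 && wfCheck Encodable.encode M.rankΔ n.unpair.2 &&
    -- `recodeLabels (3 * ·)` turns the code of `t` into the code of `embedM t`
    decide ([recodeLabels (3 * ·) n.unpair.2] ∈
      evalRhsC [valueTable M.rules M.rules_fin n.unpair.1]
        (.lett 0 M.q₀ 0 [] (.ret [.node (.lvar 0) []]) : MRhs Δ Q))

theorem tauCheck_primrec (M : MRMTT Γ Δ Q) : Primrec (tauCheck M) := by
  open Primrec in
  have hval : Primrec fun n : ℕ => evalRhsC [valueTable M.rules M.rules_fin n.unpair.1]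
      (.lett 0 M.q₀ 0 [] (.ret [.node (.lvar 0) []]) : MRhs Δ Q) :=
    (evalRhsC_primrec _).comp
      (list_cons.comp ((valueTable_primrec _ _).comp (fst.comp unpair))
        (const ([] : List ValueTable)))
  have hout : Primrec fun n : ℕ => [recodeLabels (3 * ·) n.unpair.2] :=
    list_cons.comp ((recodeLabels_primrec (nat_mul.comp (const 3) .id)).comp (snd.comp unpair))
      (const ([] : List ℕ))
  have hmem : PrimrecRel fun (v : List ℕ) (L : List (List ℕ)) => v ∈ L :=
    (PrimrecRel.exists_mem_list Primrec.eq).swap.of_eq fun v L => by simp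
  exact Primrec.and.comp (Primrec.and.comp
    ((wfCheck_primrec _ _).comp (fst.comp unpair)) ((wfCheck_primrec _ _).comp (snd.comp unpair)))
    (hmem.decide.comp hout hval)

theorem tauCheck_eq_true_iff (M : MRMTT Γ Δ Q) (s : RTree Γ) (t : RTree Δ) :
    tauCheck M (Nat.pair (encodeTree Encodable.encode s) (encodeTree Encodable.encode t)) =
        true ↔
      (s, t) ∈ tauMR M.rankΓ M.rankΔ M.dim M.rules M.q₀ := by
  have hval : [encodeMT (embedM t)] ∈ evalRhsC [valueTable M.rules M.rules_fin
        (encodeTree Encodable.encode s)] (.lett 0 M.q₀ 0 [] (.ret [.node (.lvar 0) []])) ↔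
      SemMR M.dim M.rules [s] (.lett 0 M.q₀ 0 [] (.ret [.node (.lvar 0) []])) [embedM t] :=
    (mem_evalRhsC_iff (env := [s])
      (tbl := fun u => valueTable M.rules M.rules_fin (encodeTree Encodable.encode u))
      (by simpa using isValueTable_valueTable M.rules M.rules_fin M.dim s) _ _).trans
      ⟨fun ⟨_, h, hξs⟩ => List.map_injective_iff.2 encodeMT_injective
        (hξs.trans rfl : _ = [embedM t].map encodeMT) ▸ h, fun h => ⟨_, h, rfl⟩⟩
  simp only [tauCheck, tauMR, Set.mem_ofPred_eq, Nat.unpair_pair, Bool.and_eq_true,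
    wfCheck_encodeTree Encodable.encode_injective, decide_eq_true_iff, ← encodeMT_embedM, hval,
    and_assoc]

end Decision

/-- For every multi-return macro tree transducer `M`, the
translation membership problem for `τ_{IO,M}` is decidable: the characteristic
function of `τ_{IO,M}` is computable with respect to the fixed effective
encoding `(s,t) ↦ Nat.pair (encodeTree encode s) (encodeTree encode t)`. -/
theorem translation_membership_decidable_mr {Γ Δ Q : Type}
    [Fintype Γ] [Fintype Δ] [Fintype Q] [Encodable Γ] [Encodable Δ]
    (M : MRMTT Γ Δ Q) :
    ∃ f : ℕ → Bool, Computable f ∧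
      ∀ (s : RTree Γ) (t : RTree Δ),
        (s, t) ∈ tauMR M.rankΓ M.rankΔ M.dim M.rules M.q₀ ↔
          f (Nat.pair (encodeTree Encodable.encode s)
                      (encodeTree Encodable.encode t)) = true :=
  ⟨tauCheck M, (tauCheck_primrec M).to_comp, fun s t => (tauCheck_eq_true_iff M s t).symm⟩

end MttF
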